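/- Any bijective quasi-isometry φ' : DL(n^k, n^k) → DL(n,n) is a bounded distance from a map of the form i ∘ φ, where i : DL(n^k,n^k) → DL(n,n) is the natural inclusion of index k and φ : DL(n^k,n^k) → DL(n^k,n^k) is a k-to-1 quasi-isometry; explicitly φ = i⁻¹ ∘ up ∘ φ', where up : DL(n,n) → i(DL(n^k,n^k)) is a k-to-1 map at bounded distance from the identity. -/

import Mathlib

/-- An abstract model of the n-adic numbers `ℚ_n` (as in the other statements). -/
structure NadicModel (n : ℕ) (X : Type*) [MetricSpace X] : Prop where
  n_ge_two : 2 ≤ n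
  nonempty : Nonempty X
  ultrametric : ∀ x y z : X, dist x z ≤ max (dist x y) (dist y z)
  dist_pow : ∀ x y : X, x ≠ y → ∃ i : ℤ, dist x y = (n : ℝ) ^ i
  diam_ball : ∀ (x : X) (i : ℤ),
    Metric.diam (Metric.closedBall x ((n : ℝ) ^ i)) = (n : ℝ) ^ i
  subdiv : ∀ (x : X) (i : ℤ), ∃ S : Finset X, S.card = n ∧
    Metric.closedBall x ((n : ℝ) ^ i) = ⋃ y ∈ S, Metric.closedBall y ((n : ℝ) ^ (i - 1)) ∧
    (S : Set X).Pairwise fun y z =>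
      Disjoint (Metric.closedBall y ((n : ℝ) ^ (i - 1))) (Metric.closedBall z ((n : ℝ) ^ (i - 1)))
  proper : ProperSpace X

/-- The clone (closed ball) of diameter `n^i` around `x`. -/
def clone (n : ℕ) {X : Type*} [MetricSpace X] (x : X) (i : ℤ) : Set X :=
  Metric.closedBall x ((n : ℝ) ^ i)

/-- A clone in `ℚ_n`. -/
def IsClone (n : ℕ) {X : Type*} [MetricSpace X] (C : Set X) : Prop :=
  ∃ (x : X) (i : ℤ), C = clone n x i

/-- A vertex of the Diestel–Leader graph `DL(n,n)` in the coordinates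
`ℚ_n × ℚ_n × ℝ`: a height `t ∈ ℤ` together with a clone of diameter `n^t` in the
lower boundary and a clone of diameter `n^{-t}` in the upper boundary. -/
structure DLPoint (n : ℕ) (X : Type*) [MetricSpace X] where
  A : Set X
  B : Set X
  t : ℤ
  hA : ∃ x : X, A = clone n x t
  hB : ∃ y : X, B = clone n y (-t)

/-- One upward step in `DL(n,n)`. -/
def DLPstep {n : ℕ} {X : Type*} [MetricSpace X] (v w : DLPoint n X) : Prop :=
  w.t = v.t + 1 ∧ v.A ⊆ w.A ∧ w.B ⊆ v.B

/-- The Diestel–Leader graph `DL(n,n)` on `DLPoint n X`. -/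
def DLPGraph (n : ℕ) (X : Type*) [MetricSpace X] : SimpleGraph (DLPoint n X) where
  Adj v w := (DLPstep v w ∨ DLPstep w v) ∧ v ≠ w
  symm := by constructor; intro v w h; exact ⟨h.1.symm.imp id id, h.2.symm⟩
  loopless := by constructor; intro v h; exact h.2 rfl

/-- The `r`-boundary of a set of DL-vertices with respect to the graph metric. -/
def DLPrBoundary {n : ℕ} {X : Type*} [MetricSpace X] (r : ℕ)
    (S : Set (DLPoint n X)) : Set (DLPoint n X) :=
  {v | (v ∈ S ∧ ∃ w ∉ S, (DLPGraph n X).Reachable v w ∧ (DLPGraph n X).dist v w ≤ r) ∨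
       (v ∉ S ∧ ∃ w ∈ S, (DLPGraph n X).Reachable v w ∧ (DLPGraph n X).dist v w ≤ r)}

/-- The box `S_{C_l,C_u}` of height `H = b - a` determined by a clone `C_l` of
diameter `n^b` (lower) and a clone `C_u` of diameter `n^{-a}` (upper): all vertices
whose lower clone lies in `C_l`, whose upper clone lies in `C_u`, and whose height
lies in `[a,b]`. -/
def DLPbox {n : ℕ} {X : Type*} [MetricSpace X] (Cl Cu : Set X) (a b : ℤ) :
    Set (DLPoint n X) :=
  {v | v.A ⊆ Cl ∧ v.B ⊆ Cu ∧ a ≤ v.t ∧ v.t ≤ b}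

/-- The vertex set of `DL(n^k, n^k)` sitting inside `DL(n,n)`: the vertices whose
height lies in `kℤ`. -/
def DLkVert (n k : ℕ) (X : Type*) [MetricSpace X] : Type _ :=
  {v : DLPoint n X // (k : ℤ) ∣ v.t}

/-- One upward step in `DL(n^k, n^k)` (a `k`-step of `DL(n,n)`). -/
def DLkstep {n k : ℕ} {X : Type*} [MetricSpace X] (v w : DLkVert n k X) : Prop :=
  w.val.t = v.val.t + k ∧ v.val.A ⊆ w.val.A ∧ w.val.B ⊆ v.val.B

/-- The graph `DL(n^k, n^k)` on the vertices of `DL(n,n)` at heights in `kℤ`. -/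
def DLkGraph (n k : ℕ) (X : Type*) [MetricSpace X] : SimpleGraph (DLkVert n k X) where
  Adj v w := (DLkstep v w ∨ DLkstep w v) ∧ v ≠ w
  symm := by constructor; intro v w h; exact ⟨h.1.symm.imp id id, h.2.symm⟩
  loopless := by constructor; intro v h; exact h.2 rfl

/-- The natural index-`k` inclusion `i : DL(n^k,n^k) → DL(n,n)`. -/
def DLinc (n k : ℕ) (X : Type*) [MetricSpace X] : DLkVert n k X → DLPoint n X :=
  Subtype.val

namespace S19

variable {n k : ℕ} {X : Type*} [MetricSpace X]

/-- `C` is a clone at level `i`. -/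
def IsCloneAt (n : ℕ) {X : Type*} [MetricSpace X] (C : Set X) (i : ℤ) : Prop :=
  ∃ x : X, C = clone n x i

lemma one_le_cast (hn : 2 ≤ n) : (1 : ℝ) ≤ (n : ℝ) := by exact_mod_cast hn.trans' (by norm_num)

lemma zpow_mono (hn : 2 ≤ n) {i j : ℤ} (h : i ≤ j) : (n : ℝ) ^ i ≤ (n : ℝ) ^ j :=
  zpow_le_zpow_right₀ (one_le_cast hn) h

lemma zpow_nonneg' (hn : 2 ≤ n) (i : ℤ) : (0 : ℝ) ≤ (n : ℝ) ^ i :=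
  zpow_nonneg (by positivity) i

lemma mem_clone_self (hn : 2 ≤ n) (x : X) (i : ℤ) : x ∈ clone n x i :=
  Metric.mem_closedBall_self (zpow_nonneg' hn i)

lemma clone_nonempty (hn : 2 ≤ n) {C : Set X} {i : ℤ} (h : IsCloneAt n C i) : C.Nonempty := by
  obtain ⟨x, rfl⟩ := h; exact ⟨x, mem_clone_self hn x i⟩

lemma clone_eq_of_dist_le (hX : NadicModel n X) {x z : X} {i : ℤ}
    (h : dist x z ≤ (n : ℝ) ^ i) : clone n x i = clone n z i := by
  have key : ∀ a b : X, dist a b ≤ (n:ℝ)^i → clone n a i ⊆ clone n b i := by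
    intro a b hab w hw
    have hw' : dist w a ≤ (n:ℝ)^i := hw
    have := hX.ultrametric w a b
    show dist w b ≤ (n:ℝ)^i
    exact this.trans (max_le hw' hab)
  exact le_antisymm (key x z h) (key z x (by rwa [dist_comm]))

lemma clone_eq_of_mem (hX : NadicModel n X) {C : Set X} {i : ℤ} {x : X}
    (hC : IsCloneAt n C i) (hx : x ∈ C) : C = clone n x i := by
  obtain ⟨z, rfl⟩ := hC
  exact (clone_eq_of_dist_le hX (hx : dist x z ≤ (n:ℝ)^i)).symm

lemma clone_mono (hn : 2 ≤ n) (x : X) {i j : ℤ} (h : i ≤ j) : clone n x i ⊆ clone n x j :=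
  Metric.closedBall_subset_closedBall (zpow_mono hn h)

/-- nested clones: if they intersect and `i ≤ j` then the small is inside the big. -/
lemma clone_nest (hX : NadicModel n X) {x z : X} {i j : ℤ} (hij : i ≤ j)
    (hne : (clone n x i ∩ clone n z j).Nonempty) : clone n x i ⊆ clone n z j := by
  obtain ⟨w, hw1, hw2⟩ := hne
  have h1 : clone n x i = clone n w i :=
    clone_eq_of_mem hX ⟨x, rfl⟩ hw1 |>.symm ▸ rfl
  calc clone n x i = clone n w i := clone_eq_of_mem hX (⟨x, rfl⟩ : IsCloneAt n _ i) hw1 ▸ rfl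
    _ ⊆ clone n w j := clone_mono hX.n_ge_two w hij
    _ = clone n z j := (clone_eq_of_mem hX (⟨z, rfl⟩ : IsCloneAt n _ j) hw2).symm

lemma clone_eq_clone_of_subset (hX : NadicModel n X) {A C : Set X} {i : ℤ}
    (hA : IsCloneAt n A i) (hC : IsCloneAt n C i) (h : A ⊆ C) : A = C := by
  obtain ⟨x, rfl⟩ := hA
  have hx : x ∈ C := h (mem_clone_self hX.n_ge_two x i)
  exact (clone_eq_of_mem hX hC hx).symm

end S19

namespace S19
section Child
variable {n : ℕ} {X : Type*} [MetricSpace X]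

lemma ctr_ex (hX : NadicModel n X) (C : Set X) (i : ℤ) :
    ∃ x : X, IsCloneAt n C i → C = clone n x i := by
  by_cases h : IsCloneAt n C i
  · exact ⟨h.choose, fun _ => h.choose_spec⟩
  · exact ⟨hX.nonempty.some, fun hc => absurd hc h⟩

/-- canonical center of a clone -/
noncomputable def ctr (hX : NadicModel n X) (C : Set X) (i : ℤ) : X :=
  (ctr_ex hX C i).choose

lemma ctr_spec (hX : NadicModel n X) {C : Set X} {i : ℤ} (h : IsCloneAt n C i) :
    C = clone n (ctr hX C i) i :=
  (ctr_ex hX C i).choose_spec h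

lemma ctr_mem (hX : NadicModel n X) {C : Set X} {i : ℤ} (h : IsCloneAt n C i) :
    ctr hX C i ∈ C := by
  have h2 := mem_clone_self hX.n_ge_two (ctr hX C i) i
  rw [← ctr_spec hX h] at h2
  exact h2

/-- the set of centers of children of a clone -/
noncomputable def kids (hX : NadicModel n X) (C : Set X) (i : ℤ) : Finset X :=
  (hX.subdiv (ctr hX C i) i).choose

lemma kids_card (hX : NadicModel n X) (C : Set X) (i : ℤ) : (kids hX C i).card = n :=
  (hX.subdiv (ctr hX C i) i).choose_spec.1

lemma kids_union (hX : NadicModel n X) {C : Set X} {i : ℤ} (h : IsCloneAt n C i) :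
    C = ⋃ y ∈ kids hX C i, Metric.closedBall y ((n : ℝ) ^ (i - 1)) := by
  have h2 := (hX.subdiv (ctr hX C i) i).choose_spec.2.1
  exact (ctr_spec hX h).trans h2

lemma kids_disj (hX : NadicModel n X) (C : Set X) (i : ℤ) :
    ((kids hX C i : Set X)).Pairwise fun y z =>
      Disjoint (Metric.closedBall y ((n : ℝ) ^ (i - 1)))
        (Metric.closedBall z ((n : ℝ) ^ (i - 1))) :=
  (hX.subdiv (ctr hX C i) i).choose_spec.2.2

/-- center of `d`-th child -/
noncomputable def childCtr (hX : NadicModel n X) (C : Set X) (i : ℤ) (d : Fin n) : X :=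
  ((kids hX C i).equivFin.symm (Fin.cast (kids_card hX C i).symm d) : X)

lemma childCtr_mem_kids (hX : NadicModel n X) (C : Set X) (i : ℤ) (d : Fin n) :
    childCtr hX C i d ∈ kids hX C i :=
  ((kids hX C i).equivFin.symm _).2

lemma childCtr_inj (hX : NadicModel n X) (C : Set X) (i : ℤ) {d d' : Fin n}
    (h : d ≠ d') : childCtr hX C i d ≠ childCtr hX C i d' := by
  intro he
  apply h
  have := (kids hX C i).equivFin.symm.injective (Subtype.ext he)
  simpa [Fin.ext_iff] using congrArg Fin.val this

lemma childCtr_surj (hX : NadicModel n X) (C : Set X) (i : ℤ) {y : X}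
    (hy : y ∈ kids hX C i) : ∃ d : Fin n, childCtr hX C i d = y := by
  refine ⟨Fin.cast (kids_card hX C i) ((kids hX C i).equivFin ⟨y, hy⟩), ?_⟩
  simp [childCtr]

/-- the `d`-th child of a clone -/
noncomputable def child (hX : NadicModel n X) (C : Set X) (i : ℤ) (d : Fin n) : Set X :=
  clone n (childCtr hX C i d) (i - 1)

lemma child_isClone (hX : NadicModel n X) (C : Set X) (i : ℤ) (d : Fin n) :
    IsCloneAt n (child hX C i d) (i - 1) := ⟨_, rfl⟩

lemma child_subset (hX : NadicModel n X) {C : Set X} {i : ℤ} (h : IsCloneAt n C i)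
    (d : Fin n) : child hX C i d ⊆ C := by
  have h2 : Metric.closedBall (childCtr hX C i d) ((n:ℝ)^(i-1)) ⊆
      ⋃ y ∈ kids hX C i, Metric.closedBall y ((n : ℝ) ^ (i - 1)) :=
    Set.subset_biUnion_of_mem (u := fun y => Metric.closedBall y ((n:ℝ)^(i-1))) (childCtr_mem_kids hX C i d)
  rw [← kids_union hX h] at h2
  exact h2

lemma child_disjoint (hX : NadicModel n X) (C : Set X) (i : ℤ) {d d' : Fin n}
    (h : d ≠ d') : Disjoint (child hX C i d) (child hX C i d') :=
  kids_disj hX C i (childCtr_mem_kids hX C i d) (childCtr_mem_kids hX C i d')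
    (childCtr_inj hX C i h)

/-- every point of `C` lies in some child -/
lemma exists_child_mem (hX : NadicModel n X) {C : Set X} {i : ℤ} (h : IsCloneAt n C i)
    {x : X} (hx : x ∈ C) : ∃ d : Fin n, x ∈ child hX C i d := by
  rw [kids_union hX h] at hx
  simp only [Set.mem_iUnion] at hx
  obtain ⟨y, hy, hxy⟩ := hx
  obtain ⟨d, rfl⟩ := childCtr_surj hX C i hy
  exact ⟨d, hxy⟩

/-- every subclone one level down is a child -/
lemma eq_child_of_subset (hX : NadicModel n X) {C A : Set X} {i : ℤ} (hC : IsCloneAt n C i)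
    (hA : IsCloneAt n A (i - 1)) (hAC : A ⊆ C) : ∃ d : Fin n, A = child hX C i d := by
  have hx : ctr hX A (i-1) ∈ C := hAC (ctr_mem hX hA)
  obtain ⟨d, hd⟩ := exists_child_mem hX hC hx
  refine ⟨d, ?_⟩
  rw [ctr_spec hX hA]
  exact (clone_eq_of_mem hX (child_isClone hX C i d) hd).symm

/-- a subclone (any number of levels down) of `C` lies inside a unique child -/
lemma exists_subset_child (hX : NadicModel n X) {C A : Set X} {i : ℤ} {j : ℤ}
    (hC : IsCloneAt n C i) (hA : IsCloneAt n A j) (hj : j ≤ i - 1) (hAC : A ⊆ C) :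
    ∃ d : Fin n, A ⊆ child hX C i d := by
  have hx : ctr hX A j ∈ C := hAC (ctr_mem hX hA)
  obtain ⟨d, hd⟩ := exists_child_mem hX hC hx
  refine ⟨d, ?_⟩
  rw [ctr_spec hX hA]
  obtain ⟨z, hz⟩ := child_isClone hX C i d
  rw [hz] at hd ⊢
  exact clone_nest hX hj ⟨_, mem_clone_self hX.n_ge_two _ _, hd⟩

end Child
end S19

namespace S19
section Addr
variable {n : ℕ} {X : Type*} [MetricSpace X]

/-- descend from a clone along a list of digits -/
noncomputable def desc (hX : NadicModel n X) : List (Fin n) → Set X → ℤ → Set X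
  | [], C, _ => C
  | d :: ds, C, i => desc hX ds (child hX C i d) (i - 1)

/-- the address of a subclone `A` (at level `i - j`) inside the clone `C` at level `i` -/
noncomputable def addr (hX : NadicModel n X) : ℕ → Set X → ℤ → Set X → List (Fin n)
  | 0, _, _, _ => []
  | j+1, C, i, A =>
    letI := Classical.propDecidable (∃ d, A ⊆ child hX C i d)
    let d : Fin n := if h : ∃ d, A ⊆ child hX C i d then h.choose
      else ⟨0, by have := hX.n_ge_two; omega⟩
    d :: addr hX j (child hX C i d) (i-1) A

lemma addr_length (hX : NadicModel n X) (j : ℕ) (C : Set X) (i : ℤ) (A : Set X) :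
    (addr hX j C i A).length = j := by
  induction j generalizing C i with
  | zero => rfl
  | succ j ih => simp [addr, ih]

lemma desc_isClone (hX : NadicModel n X) (ds : List (Fin n)) (C : Set X) (i : ℤ)
    (hC : IsCloneAt n C i) : IsCloneAt n (desc hX ds C i) (i - ds.length) := by
  induction ds generalizing C i with
  | nil => simpa [desc] using hC
  | cons d ds ih =>
    have h2 := ih (child hX C i d) (i-1) (child_isClone hX C i d)
    have : (i - 1) - (ds.length : ℤ) = i - ((d :: ds).length : ℤ) := by
      simp; ring
    rw [this] at h2
    exact h2

lemma desc_subset (hX : NadicModel n X) (ds : List (Fin n)) (C : Set X) (i : ℤ)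
    (hC : IsCloneAt n C i) : desc hX ds C i ⊆ C := by
  induction ds generalizing C i with
  | nil => exact subset_rfl
  | cons d ds ih =>
    exact (ih (child hX C i d) (i-1) (child_isClone hX C i d)).trans
      (child_subset hX hC d)

lemma desc_addr (hX : NadicModel n X) (j : ℕ) (C : Set X) (i : ℤ) (A : Set X)
    (hC : IsCloneAt n C i) (hA : IsCloneAt n A (i - j)) (hsub : A ⊆ C) :
    desc hX (addr hX j C i A) C i = A := by
  induction j generalizing C i with
  | zero =>
    simp only [addr, desc]
    exact (clone_eq_clone_of_subset hX (by simpa using hA) hC hsub).symm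
  | succ j ih =>
    have hex : ∃ d, A ⊆ child hX C i d := by
      apply exists_subset_child hX hC hA _ hsub
      omega
    simp only [addr]
    rw [dif_pos hex]
    simp only [desc]
    apply ih (child hX C i hex.choose) (i-1) (child_isClone hX C i _)
    · have : (i : ℤ) - (1:ℤ) - (j : ℕ) = i - ((j+1 : ℕ) : ℤ) := by push_cast; ring
      rw [this]; exact hA
    · exact hex.choose_spec

lemma addr_desc (hX : NadicModel n X) (ds : List (Fin n)) (C : Set X) (i : ℤ)
    (hC : IsCloneAt n C i) : addr hX ds.length C i (desc hX ds C i) = ds := by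
  induction ds generalizing C i with
  | nil => rfl
  | cons d ds ih =>
    have hsub : desc hX (d :: ds) C i ⊆ child hX C i d :=
      desc_subset hX ds (child hX C i d) (i-1) (child_isClone hX C i d)
    have hex : ∃ d', desc hX (d :: ds) C i ⊆ child hX C i d' := ⟨d, hsub⟩
    have hchoose : hex.choose = d := by
      by_contra hne
      have hdisj := child_disjoint hX C i hne
      have hne' : (desc hX (d :: ds) C i).Nonempty := by
        apply clone_nonempty hX.n_ge_two
        exact desc_isClone hX _ C i hC
      obtain ⟨z, hz⟩ := hne'
      exact Set.not_nonempty_empty ⟨z, (hdisj.inter_eq) ▸ ⟨hex.choose_spec hz, hsub hz⟩⟩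
    simp only [List.length_cons, addr]
    rw [dif_pos hex, hchoose]
    have : desc hX (d :: ds) C i = desc hX ds (child hX C i d) (i-1) := rfl
    rw [this]
    rw [ih (child hX C i d) (i-1) (child_isClone hX C i d)]

lemma desc_append (hX : NadicModel n X) (l : List (Fin n)) (d : Fin n) (C : Set X) (i : ℤ) :
    desc hX (l ++ [d]) C i = child hX (desc hX l C i) (i - l.length) d := by
  induction l generalizing C i with
  | nil => simp [desc]
  | cons e l ih =>
    simp only [List.cons_append, desc]
    rw [ih]
    norm_num
    ring_nf

end Addr
end S19

namespace S19
section Graph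
variable {n : ℕ} {X : Type*} [MetricSpace X]

lemma DLPoint.ext' {v w : DLPoint n X} (hA : v.A = w.A) (hB : v.B = w.B)
    (ht : v.t = w.t) : v = w := by
  cases v; cases w; dsimp at hA hB ht; subst hA; subst hB; subst ht; rfl

lemma DLPoint.ne_of_t {v w : DLPoint n X} (h : v.t ≠ w.t) : v ≠ w :=
  fun he => h (congrArg DLPoint.t he)

/-- the vertex with data `(clone n x t, clone n y (-t), t)` -/
def pt (n : ℕ) {X : Type*} [MetricSpace X] (x y : X) (t : ℤ) : DLPoint n X :=
  ⟨clone n x t, clone n y (-t), t, ⟨x, rfl⟩, ⟨y, rfl⟩⟩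

/-- canonical first coordinate center -/
noncomputable def cA (hX : NadicModel n X) (v : DLPoint n X) : X := ctr hX v.A v.t
noncomputable def cB (hX : NadicModel n X) (v : DLPoint n X) : X := ctr hX v.B (-v.t)

lemma A_isClone (v : DLPoint n X) : IsCloneAt n v.A v.t := v.hA
lemma B_isClone (v : DLPoint n X) : IsCloneAt n v.B (-v.t) := v.hB

lemma A_eq (hX : NadicModel n X) (v : DLPoint n X) : v.A = clone n (cA hX v) v.t :=
  ctr_spec hX v.hA
lemma B_eq (hX : NadicModel n X) (v : DLPoint n X) : v.B = clone n (cB hX v) (-v.t) :=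
  ctr_spec hX v.hB

lemma pt_eq (hX : NadicModel n X) (v : DLPoint n X) : v = pt n (cA hX v) (cB hX v) v.t :=
  DLPoint.ext' (A_eq hX v) (B_eq hX v) rfl

lemma cA_mem (hX : NadicModel n X) (v : DLPoint n X) : cA hX v ∈ v.A := ctr_mem hX v.hA
lemma cB_mem (hX : NadicModel n X) (v : DLPoint n X) : cB hX v ∈ v.B := ctr_mem hX v.hB

lemma clone_dist (hX : NadicModel n X) {z u w : X} {i : ℤ} (hu : u ∈ clone n z i)
    (hw : w ∈ clone n z i) : dist u w ≤ (n : ℝ) ^ i := by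
  have h1 : dist u z ≤ (n:ℝ)^i := hu
  have h2 : dist w z ≤ (n:ℝ)^i := hw
  exact (hX.ultrametric u z w).trans (max_le h1 (by rwa [dist_comm]))

lemma mem_clone_dist (hX : NadicModel n X) {C : Set X} {i : ℤ} (hC : IsCloneAt n C i)
    {u w : X} (hu : u ∈ C) (hw : w ∈ C) : dist u w ≤ (n : ℝ) ^ i := by
  obtain ⟨z, rfl⟩ := hC; exact clone_dist hX hu hw

/-- generic chain-to-walk lemma -/
lemma chain_walk {V : Type*} {G : SimpleGraph V} (f : ℕ → V) :
    ∀ M : ℕ, (∀ m, m < M → G.Adj (f m) (f (m+1))) →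
      ∃ p : G.Walk (f 0) (f M), p.length = M := by
  intro M
  induction M with
  | zero => exact fun _ => ⟨SimpleGraph.Walk.nil, rfl⟩
  | succ M ih =>
    intro h
    obtain ⟨p, hp⟩ := ih (fun m hm => h m (by omega))
    exact ⟨p.concat (h M (by omega)), by simp [hp]⟩

lemma pt_adj (hX : NadicModel n X) (x y : X) (t : ℤ) :
    (DLPGraph n X).Adj (pt n x y t) (pt n x y (t+1)) := by
  constructor
  · left
    refine ⟨rfl, clone_mono hX.n_ge_two x (by omega), clone_mono hX.n_ge_two y (by omega)⟩
  · exact DLPoint.ne_of_t (by simp [pt])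

lemma vwalk (hX : NadicModel n X) (x y : X) (t : ℤ) (m : ℕ) :
    ∃ p : (DLPGraph n X).Walk (pt n x y t) (pt n x y (t+m)), p.length = m := by
  obtain ⟨p, hp⟩ := chain_walk (G := DLPGraph n X) (fun i => pt n x y (t + i)) m
    (fun i _ => by
      have := pt_adj hX x y (t + i)
      have he : (t + (i:ℤ)) + 1 = t + ((i+1 : ℕ) : ℤ) := by push_cast; ring
      rwa [he] at this)
  refine ⟨p.copy (by norm_num) rfl, by simp [hp]⟩

/-- the universal three-leg walk bound in `DL(n,n)` -/
lemma dP_le (hX : NadicModel n X) (a b : DLPoint n X) (p q : ℕ)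
    (hp : dist (cA hX a) (cA hX b) ≤ (n:ℝ)^(a.t + p))
    (hq : dist (cB hX a) (cB hX b) ≤ (n:ℝ)^(-a.t + q))
    (hb1 : b.t ≤ a.t + p) (hb2 : a.t - q ≤ b.t) :
    (DLPGraph n X).Reachable a b ∧ (DLPGraph n X).dist a b ≤ 3*p + 2*q := by
  set xa := cA hX a; set ya := cB hX a; set xb := cA hX b; set yb := cB hX b
  obtain ⟨p1, hp1⟩ := vwalk hX xa ya a.t p
  obtain ⟨p2, hp2⟩ := vwalk hX xb ya (a.t - q) (p + q)
  obtain ⟨p3, hp3⟩ := vwalk hX xb yb (a.t - q) (b.t - (a.t - q)).toNat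
  have eqa : pt n xa ya a.t = a := (pt_eq hX a).symm
  have eq1 : pt n xa ya (a.t + p) = pt n xb ya (a.t + p) := by
    refine DLPoint.ext' ?_ rfl rfl
    exact clone_eq_of_dist_le hX hp
  have eq2' : (a.t - q) + ((p + q : ℕ) : ℤ) = a.t + p := by push_cast; ring
  have eq2 : pt n xb ya (a.t - q) = pt n xb yb (a.t - q) := by
    refine DLPoint.ext' rfl ?_ rfl
    have h2 : -(a.t - (q:ℤ)) = -a.t + q := by ring
    show clone n ya (-(a.t - (q:ℤ))) = clone n yb (-(a.t - (q:ℤ)))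
    rw [h2]
    exact clone_eq_of_dist_le hX hq
  have eq3 : (a.t - q) + ((b.t - (a.t - q)).toNat : ℤ) = b.t := by omega
  have eqb : pt n xb yb b.t = b := (pt_eq hX b).symm
  set W := ((p1.copy eqa rfl).append
      (p2.copy eq2 ((congrArg (pt n xb ya) eq2').trans eq1.symm)).reverse).append
      (p3.copy rfl ((congrArg (pt n xb yb) eq3).trans eqb)) with hW
  refine ⟨⟨W⟩, le_trans (SimpleGraph.dist_le W) ?_⟩
  rw [hW]
  simp only [SimpleGraph.Walk.length_append, SimpleGraph.Walk.length_reverse,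
    SimpleGraph.Walk.length_copy, hp1, hp2, hp3]
  omega

lemma exists_exp (hn : 2 ≤ n) (c : ℝ) (e : ℤ) : ∃ p : ℕ, c ≤ (n:ℝ)^(e + p) := by
  obtain ⟨m, hm⟩ := exists_nat_ge c
  refine ⟨(m - e).toNat, ?_⟩
  have h1 : (m : ℝ) ≤ (n:ℝ)^(m : ℤ) := by
    rw [zpow_natCast]
    calc (m:ℝ) ≤ ((2^m : ℕ) : ℝ) := by exact_mod_cast (Nat.lt_two_pow_self (n := m)).le
      _ ≤ ((n^m : ℕ) : ℝ) := by exact_mod_cast Nat.pow_le_pow_left hn m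
      _ = (n:ℝ)^m := by push_cast; ring
  have h2 : (m : ℤ) ≤ e + (m - e).toNat := by omega
  exact hm.trans (h1.trans (zpow_mono hn h2))

lemma dP_reach (hX : NadicModel n X) (a b : DLPoint n X) :
    (DLPGraph n X).Reachable a b := by
  obtain ⟨p1, hp1⟩ := exists_exp hX.n_ge_two (dist (cA hX a) (cA hX b)) a.t
  obtain ⟨q1, hq1⟩ := exists_exp hX.n_ge_two (dist (cB hX a) (cB hX b)) (-a.t)
  set p := p1 + (b.t - a.t).toNat with hp
  set q := q1 + (a.t - b.t).toNat with hq
  have h1 : (a.t + (p1:ℤ)) ≤ a.t + p := by omega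
  have h2 : (-a.t + (q1:ℤ)) ≤ -a.t + q := by omega
  exact (dP_le hX a b p q (hp1.trans (zpow_mono hX.n_ge_two h1))
    (hq1.trans (zpow_mono hX.n_ge_two h2)) (by omega) (by omega)).1

lemma dP_conn (hX : NadicModel n X) : (DLPGraph n X).Connected := by
  rw [SimpleGraph.connected_iff]
  refine ⟨fun a b => dP_reach hX a b, ?_⟩
  obtain ⟨x⟩ := hX.nonempty
  exact ⟨pt n x x 0⟩

/-- adjacency step bounds -/
lemma adj_step (hX : NadicModel n X) {a c : DLPoint n X}
    (h : (DLPGraph n X).Adj a c) :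
    dist (cA hX a) (cA hX c) ≤ (n:ℝ)^(a.t + 1) ∧
    dist (cB hX a) (cB hX c) ≤ (n:ℝ)^(-a.t + 1) ∧
    (c.t = a.t + 1 ∨ c.t = a.t - 1) := by
  obtain ⟨hstep, -⟩ := h
  have hmono : ∀ {i j : ℤ}, i ≤ j → (n:ℝ)^i ≤ (n:ℝ)^j := fun h => zpow_mono hX.n_ge_two h
  rcases hstep with ⟨ht, hA, hB⟩ | ⟨ht, hA, hB⟩
  · -- DLPstep a c : c.t = a.t + 1, a.A ⊆ c.A, c.B ⊆ a.B
    refine ⟨?_, ?_, Or.inl ht⟩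
    · have := mem_clone_dist hX (A_isClone c) (hA (cA_mem hX a)) (cA_mem hX c)
      rw [ht] at this; exact this
    · have := mem_clone_dist hX (B_isClone a) (cB_mem hX a) (hB (cB_mem hX c))
      exact this.trans (hmono (by omega))
  · -- DLPstep c a : a.t = c.t + 1, c.A ⊆ a.A, a.B ⊆ c.B
    refine ⟨?_, ?_, Or.inr (by omega)⟩
    · have := mem_clone_dist hX (A_isClone a) (cA_mem hX a) (hA (cA_mem hX c))
      exact this.trans (hmono (by omega))
    · have := mem_clone_dist hX (B_isClone c) (hB (cB_mem hX a)) (cB_mem hX c)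
      have h2 : -c.t = -a.t + 1 := by omega
      rw [h2] at this; exact this

/-- The key invariant: along a walk of length `L`, clones stay inside the
`L`-fattened clones of the start. -/
lemma walk_bound (hX : NadicModel n X) {a b : DLPoint n X}
    (w : (DLPGraph n X).Walk a b) :
    b.A ⊆ clone n (cA hX a) (a.t + w.length) ∧
    b.B ⊆ clone n (cB hX a) (-a.t + w.length) ∧
    a.t - w.length ≤ b.t ∧ b.t ≤ a.t + w.length := by
  induction w with
  | nil =>
    rename_i u
    refine ⟨?_, ?_, by simp, by simp⟩
    · simp only [SimpleGraph.Walk.length_nil]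
      have h2 := clone_mono (x := cA hX u) hX.n_ge_two (show u.t ≤ u.t + ((0:ℕ):ℤ) by omega)
      rw [← A_eq hX u] at h2; exact h2
    · simp only [SimpleGraph.Walk.length_nil]
      have h2 := clone_mono (x := cB hX u) hX.n_ge_two (show -u.t ≤ -u.t + ((0:ℕ):ℤ) by omega)
      rw [← B_eq hX u] at h2; exact h2
  | @cons a c b hadj w ih =>
    obtain ⟨ihA, ihB, iht1, iht2⟩ := ih
    obtain ⟨hdA, hdB, hts⟩ := adj_step hX hadj
    have hct1 : c.t ≤ a.t + 1 := by omega
    have hct2 : a.t - 1 ≤ c.t := by omega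
    set L := w.length with hL
    have hlen : ((SimpleGraph.Walk.cons hadj w).length : ℤ) = L + 1 := by
      simp [SimpleGraph.Walk.length_cons, hL]
    rw [hlen]
    have hmono : ∀ {i j : ℤ}, i ≤ j → (n:ℝ)^i ≤ (n:ℝ)^j := fun h => zpow_mono hX.n_ge_two h
    constructor
    · -- A side
      have s1 : clone n (cA hX c) (c.t + L) ⊆ clone n (cA hX c) (a.t + (L+1)) :=
        clone_mono hX.n_ge_two _ (by omega)
    
      have s2 : clone n (cA hX c) (a.t + (L+1)) = clone n (cA hX a) (a.t + (L+1)) := by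
        apply clone_eq_of_dist_le hX
        rw [dist_comm]
        exact hdA.trans (hmono (by omega))
      exact fun z hz => s2 ▸ (s1 (ihA hz))
    constructor
    · -- B side
      have s1 : clone n (cB hX c) (-c.t + L) ⊆ clone n (cB hX c) (-a.t + (L+1)) :=
        clone_mono hX.n_ge_two _ (by omega)
      have s2 : clone n (cB hX c) (-a.t + (L+1)) = clone n (cB hX a) (-a.t + (L+1)) := by
        apply clone_eq_of_dist_le hX
        rw [dist_comm]
        exact hdB.trans (hmono (by omega))
      exact fun z hz => s2 ▸ (s1 (ihB hz))
    omega

/-- distances to centers are controlled by the graph distance. -/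
lemma dist_controls (hX : NadicModel n X) (a b : DLPoint n X) :
    dist (cA hX a) (cA hX b) ≤ (n:ℝ)^(a.t + (DLPGraph n X).dist a b) ∧
    dist (cB hX a) (cB hX b) ≤ (n:ℝ)^(-a.t + (DLPGraph n X).dist a b) ∧
    a.t - (DLPGraph n X).dist a b ≤ b.t ∧ b.t ≤ a.t + (DLPGraph n X).dist a b := by
  obtain ⟨w, hw⟩ := (dP_reach hX a b).exists_walk_length_eq_dist
  obtain ⟨hA, hB, h1, h2⟩ := walk_bound hX w
  rw [hw] at hA hB h1 h2
  refine ⟨?_, ?_, h1, h2⟩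
  · have := hA (cA_mem hX b)
    rw [dist_comm]
    exact this
  · have := hB (cB_mem hX b)
    rw [dist_comm]
    exact this

end Graph
end S19

namespace S19
section KGraph
variable {n k : ℕ} {X : Type*} [MetricSpace X]

/-- underlying DLPoint of a k-vertex -/
def vrt {n k : ℕ} {X : Type*} [MetricSpace X] (a : DLkVert n k X) : DLPoint n X :=
  Subtype.val a

lemma vrt_dvd (a : DLkVert n k X) : (k:ℤ) ∣ (vrt a).t := Subtype.prop a

lemma DLkVert.ext' {a b : DLkVert n k X} (h : vrt a = vrt b) : a = b := Subtype.ext h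

def ptk (n k : ℕ) {X : Type*} [MetricSpace X] (x y : X) (t : ℤ) (h : (k:ℤ) ∣ t) :
    DLkVert n k X := ⟨pt n x y t, h⟩

lemma vrt_ptk (x y : X) (t : ℤ) (h : (k:ℤ) ∣ t) : vrt (ptk n k x y t h) = pt n x y t := rfl

lemma ptk_adj (hX : NadicModel n X) (hk : 0 < k) (x y : X) (t : ℤ) (h : (k:ℤ) ∣ t)
    (h' : (k:ℤ) ∣ (t + k)) :
    (DLkGraph n k X).Adj (ptk n k x y t h) (ptk n k x y (t+k) h') := by
  constructor
  · left
    exact ⟨rfl, clone_mono hX.n_ge_two x (by omega), clone_mono hX.n_ge_two y (by omega)⟩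
  · intro he
    have := congrArg (fun z : DLkVert n k X => (vrt z).t) he
    simp only [vrt_ptk, pt] at this
    omega

lemma vwalkk (hX : NadicModel n X) (hk : 0 < k) (x y : X) (t : ℤ) (h : (k:ℤ) ∣ t) (m : ℕ)
    (h' : (k:ℤ) ∣ (t + k*m)) :
    ∃ p : (DLkGraph n k X).Walk (ptk n k x y t h) (ptk n k x y (t + k*m) h'), p.length = m := by
  obtain ⟨p, hp⟩ := chain_walk (G := DLkGraph n k X)
    (fun i => ptk n k x y (t + k*i) (dvd_add h ⟨i, by push_cast; ring⟩)) m
    (fun i _ => by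
      have h2 := ptk_adj hX hk x y (t + k*i) (dvd_add h ⟨i, by push_cast; ring⟩)
        (dvd_add (dvd_add h ⟨i, by push_cast; ring⟩) ⟨1, by ring⟩)
      have he2 : ptk n k x y ((t + k*(i:ℤ)) + k)
            (dvd_add (dvd_add h ⟨i, by push_cast; ring⟩) ⟨1, by ring⟩)
          = ptk n k x y (t + k*((i+1:ℕ):ℤ)) (dvd_add h ⟨(i+1:ℕ), by push_cast; ring⟩) := by
        apply DLkVert.ext'
        rw [vrt_ptk, vrt_ptk]
        congr 1
        push_cast; ring
      rwa [he2] at h2)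
  have e0 : ptk n k x y (t + k*((0:ℕ):ℤ)) (dvd_add h ⟨(0:ℕ), by push_cast; ring⟩)
      = ptk n k x y t h := by
    apply DLkVert.ext'; rw [vrt_ptk, vrt_ptk]; norm_num
  exact ⟨p.copy e0 rfl, by simp [hp]⟩

/-- the universal three-leg walk bound in `DL(n^k,n^k)` -/
lemma dk_le (hX : NadicModel n X) (hk : 0 < k) (a b : DLkVert n k X) (p q : ℕ)
    (hp : dist (cA hX (vrt a)) (cA hX (vrt b)) ≤ (n:ℝ)^((vrt a).t + (k:ℤ)*p))
    (hq : dist (cB hX (vrt a)) (cB hX (vrt b)) ≤ (n:ℝ)^(-(vrt a).t + (k:ℤ)*q))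
    (hb1 : (vrt b).t ≤ (vrt a).t + (k:ℤ)*p) (hb2 : (vrt a).t - (k:ℤ)*q ≤ (vrt b).t) :
    (DLkGraph n k X).Reachable a b ∧ (DLkGraph n k X).dist a b ≤ 3*p + 2*q := by
  set xa := cA hX (vrt a); set ya := cB hX (vrt a)
  set xb := cA hX (vrt b); set yb := cB hX (vrt b)
  set ta := (vrt a).t with hta; set tb := (vrt b).t with htb
  have ha : (k:ℤ) ∣ ta := vrt_dvd a
  have hb : (k:ℤ) ∣ tb := vrt_dvd b
  have hA1 : (k:ℤ) ∣ (ta + k*p) := dvd_add ha ⟨p, by push_cast; ring⟩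
  have hΛ : (k:ℤ) ∣ (ta - k*q) := dvd_sub ha ⟨q, by push_cast; ring⟩
  have hdvd : (k:ℤ) ∣ (tb - (ta - k*q)) := dvd_sub hb hΛ
  obtain ⟨c, hc⟩ := hdvd
  have hkz : (0:ℤ) < k := by exact_mod_cast hk
  have hc0 : 0 ≤ c := by
    by_contra hneg
    push_neg at hneg
    have : (k:ℤ)*c < 0 := mul_neg_of_pos_of_neg hkz hneg
    omega
  have hcpq : c ≤ p + q := by
    have h1 : (k:ℤ)*c ≤ k*((p:ℤ)+q) := by
      have : (k:ℤ)*((p:ℤ)+q) = (ta + k*p) - (ta - k*q) := by ring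
      omega
    exact le_of_mul_le_mul_left h1 hkz
  have hc3 : (k:ℤ)*((c.toNat : ℕ) : ℤ) = k*c := by rw [Int.toNat_of_nonneg hc0]
  obtain ⟨p1, hp1⟩ := vwalkk hX hk xa ya ta ha p hA1
  obtain ⟨p2, hp2⟩ := vwalkk hX hk xb ya (ta - k*q) hΛ (p + q)
    (by refine dvd_add hΛ ⟨(p+q:ℕ), by push_cast; ring⟩)
  obtain ⟨p3, hp3⟩ := vwalkk hX hk xb yb (ta - k*q) hΛ c.toNat
    (by refine dvd_add hΛ ⟨c.toNat, by push_cast; ring⟩)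
  have eqa : ptk n k xa ya ta ha = a := DLkVert.ext' (pt_eq hX (vrt a)).symm
  have eq1v : pt n xa ya (ta + (k:ℤ)*p) = pt n xb ya (ta + (k:ℤ)*p) :=
    DLPoint.ext' (clone_eq_of_dist_le hX hp) rfl rfl
  have eq2v : pt n xb ya (ta - (k:ℤ)*q) = pt n xb yb (ta - (k:ℤ)*q) := by
    refine DLPoint.ext' rfl ?_ rfl
    show clone n ya (-(ta - (k:ℤ)*q)) = clone n yb (-(ta - (k:ℤ)*q))
    rw [show -(ta - (k:ℤ)*q) = -ta + k*q by ring]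
    exact clone_eq_of_dist_le hX hq
  have eq2 : ptk n k xb ya (ta - k*q) hΛ = ptk n k xb yb (ta - k*q) hΛ :=
    DLkVert.ext' eq2v
  have cast2 : ptk n k xb ya ((ta - k*q) + (k:ℤ)*((p+q:ℕ):ℤ)) (dvd_add hΛ ⟨(p+q:ℕ), by push_cast; ring⟩)
      = ptk n k xa ya (ta + k*p) hA1 := by
    apply DLkVert.ext'
    rw [vrt_ptk, vrt_ptk]
    rw [show (ta - k*q) + (k:ℤ)*((p+q:ℕ):ℤ) = ta + k*p by push_cast; ring]
    exact eq1v.symm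
  have cast3 : ptk n k xb yb ((ta - k*q) + (k:ℤ)*((c.toNat:ℕ):ℤ)) (dvd_add hΛ ⟨c.toNat, by push_cast; ring⟩)
      = b := by
    apply DLkVert.ext'
    rw [vrt_ptk]
    rw [show (ta - k*q) + (k:ℤ)*((c.toNat:ℕ):ℤ) = tb by rw [hc3]; omega]
    exact (pt_eq hX (vrt b)).symm
  set W := ((p1.copy eqa rfl).append ((p2.copy eq2 cast2).reverse)).append
      (p3.copy rfl cast3) with hW
  refine ⟨⟨W⟩, le_trans (SimpleGraph.dist_le W) ?_⟩
  rw [hW]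
  simp only [SimpleGraph.Walk.length_append, SimpleGraph.Walk.length_reverse,
    SimpleGraph.Walk.length_copy, hp1, hp2, hp3]
  omega

end KGraph
end S19

namespace S19
section Compare
variable {n k : ℕ} {X : Type*} [MetricSpace X]

lemma dk_reach (hX : NadicModel n X) (hk : 0 < k) (a b : DLkVert n k X) :
    (DLkGraph n k X).Reachable a b := by
  obtain ⟨p1, hp1⟩ := exists_exp hX.n_ge_two (dist (cA hX (vrt a)) (cA hX (vrt b))) (vrt a).t
  obtain ⟨q1, hq1⟩ := exists_exp hX.n_ge_two (dist (cB hX (vrt a)) (cB hX (vrt b))) (-(vrt a).t)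
  have hk1 : (1:ℤ) ≤ (k:ℤ) := by exact_mod_cast hk
  set p := p1 + ((vrt b).t - (vrt a).t).toNat with hp
  set q := q1 + ((vrt a).t - (vrt b).t).toNat with hq
  have hpk : (p:ℤ) ≤ (k:ℤ)*p := le_mul_of_one_le_left (by positivity) hk1
  have hqk : (q:ℤ) ≤ (k:ℤ)*q := le_mul_of_one_le_left (by positivity) hk1
  have h1 : (vrt a).t + (p1:ℤ) ≤ (vrt a).t + (k:ℤ)*p := by
    have : (p1 : ℤ) ≤ (p:ℤ) := by omega
    omega
  have h2 : -(vrt a).t + (q1:ℤ) ≤ -(vrt a).t + (k:ℤ)*q := by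
    have : (q1 : ℤ) ≤ (q:ℤ) := by omega
    omega
  refine (dk_le hX hk a b p q (hp1.trans (zpow_mono hX.n_ge_two h1))
    (hq1.trans (zpow_mono hX.n_ge_two h2)) ?_ ?_).1
  · have : (vrt b).t - (vrt a).t ≤ (p:ℤ) := by omega
    omega
  · have : (vrt a).t - (vrt b).t ≤ (q:ℤ) := by omega
    omega

lemma dk_conn (hX : NadicModel n X) (hk : 0 < k) : (DLkGraph n k X).Connected := by
  rw [SimpleGraph.connected_iff]
  refine ⟨fun a b => dk_reach hX hk a b, ?_⟩
  obtain ⟨x⟩ := hX.nonempty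
  exact ⟨ptk n k x x 0 (dvd_zero _)⟩

/-- a `k`-step gives a `P`-walk of length `k` -/
lemma step_pwalk (hX : NadicModel n X) {a b : DLkVert n k X} (h : DLkstep a b) :
    ∃ p : (DLPGraph n X).Walk (vrt a) (vrt b), p.length = k := by
  obtain ⟨ht0, hA0, hB0⟩ := h
  have ht : (vrt b).t = (vrt a).t + k := ht0
  have hA : (vrt a).A ⊆ (vrt b).A := hA0
  have hB : (vrt b).B ⊆ (vrt a).B := hB0
  set xa := cA hX (vrt a); set yb := cB hX (vrt b)
  set ta := (vrt a).t with hta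
  obtain ⟨p, hp⟩ := vwalk hX xa yb ta k
  have e0 : pt n xa yb ta = vrt a := by
    refine DLPoint.ext' ?_ ?_ rfl
    · exact (A_eq hX (vrt a)).symm
    · exact (clone_eq_of_mem hX (B_isClone (vrt a)) (hB (cB_mem hX (vrt b)))).symm
  have eK : pt n xa yb (ta + (k:ℤ)) = vrt b := by
    refine DLPoint.ext' ?_ ?_ (by rw [ht]; rfl)
    · rw [← ht]
      exact (clone_eq_of_mem hX (A_isClone (vrt b)) (hA (cA_mem hX (vrt a)))).symm
    · rw [← ht]
      exact (B_eq hX (vrt b)).symm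
  exact ⟨p.copy e0 eK, by simp [hp]⟩

lemma kadj_pwalk (hX : NadicModel n X) {a b : DLkVert n k X}
    (h : (DLkGraph n k X).Adj a b) :
    ∃ p : (DLPGraph n X).Walk (vrt a) (vrt b), p.length = k := by
  rcases h.1 with hs | hs
  · exact step_pwalk hX hs
  · obtain ⟨p, hp⟩ := step_pwalk hX hs
    exact ⟨p.reverse, by simp [hp]⟩

lemma kwalk_pwalk (hX : NadicModel n X) {a b : DLkVert n k X}
    (w : (DLkGraph n k X).Walk a b) :
    ∃ p : (DLPGraph n X).Walk (vrt a) (vrt b), p.length ≤ k * w.length := by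
  induction w with
  | nil => exact ⟨SimpleGraph.Walk.nil, by simp⟩
  | @cons a c b hadj w ih =>
    obtain ⟨p1, hp1⟩ := kadj_pwalk hX hadj
    obtain ⟨p2, hp2⟩ := ih
    refine ⟨p1.append p2, ?_⟩
    rw [SimpleGraph.Walk.length_append, SimpleGraph.Walk.length_cons, hp1]
    have : k * (w.length + 1) = k * w.length + k := by ring
    omega

/-- comparison (A): the inclusion expands distances by at most `k` -/
lemma dP_le_k_dk (hX : NadicModel n X) (hk : 0 < k) (a b : DLkVert n k X) :
    (DLPGraph n X).dist (vrt a) (vrt b) ≤ k * (DLkGraph n k X).dist a b := by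
  obtain ⟨w, hw⟩ := (dk_reach hX hk a b).exists_walk_length_eq_dist
  obtain ⟨p, hp⟩ := kwalk_pwalk hX w
  exact (SimpleGraph.dist_le p).trans (hp.trans (by rw [hw]))

/-- comparison (B) -/
lemma dk_le_5dP (hX : NadicModel n X) (hk : 0 < k) (a b : DLkVert n k X) :
    (DLkGraph n k X).dist a b ≤ 5 * (DLPGraph n X).dist (vrt a) (vrt b) := by
  set D := (DLPGraph n X).dist (vrt a) (vrt b) with hD
  obtain ⟨hcA, hcB, ht1, ht2⟩ := dist_controls hX (vrt a) (vrt b)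
  have hk1 : (1:ℤ) ≤ (k:ℤ) := by exact_mod_cast hk
  have hDk : (D:ℤ) ≤ (k:ℤ)*D := le_mul_of_one_le_left (by positivity) hk1
  have h := dk_le hX hk a b D D
    (hcA.trans (zpow_mono hX.n_ge_two (by omega)))
    (hcB.trans (zpow_mono hX.n_ge_two (by omega)))
    (by omega) (by omega)
  have h2 := h.2
  omega

end Compare
end S19

namespace S19
section Up
variable {n k : ℕ} {X : Type*} [MetricSpace X]

/-- residue: number of steps up to the next multiple of `k` -/
def jv (k : ℕ) (t : ℤ) : ℕ := ((-t) % (k:ℤ)).toNat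

lemma jv_lt (hk : 0 < k) (t : ℤ) : jv k t < k := by
  have h1 : (-t) % (k:ℤ) < k := Int.emod_lt_of_pos _ (by exact_mod_cast hk)
  have h2 : 0 ≤ (-t) % (k:ℤ) := Int.emod_nonneg _ (by exact_mod_cast hk.ne')
  simp only [jv]
  omega

lemma jv_cast (hk : 0 < k) (t : ℤ) : ((jv k t : ℕ) : ℤ) = (-t) % (k:ℤ) := by
  have h2 : 0 ≤ (-t) % (k:ℤ) := Int.emod_nonneg _ (by exact_mod_cast hk.ne')
  simp only [jv]
  omega

lemma jv_dvd (hk : 0 < k) (t : ℤ) : (k:ℤ) ∣ (t + jv k t) := by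
  rw [jv_cast hk, Int.emod_def]
  exact ⟨-((-t)/(k:ℤ)), by ring⟩

lemma jv_eq_of (hk : 0 < k) {t t' : ℤ} {m : ℕ} (h : t = t' - m) (hd : (k:ℤ) ∣ t')
    (hm : m < k) : jv k t = m := by
  have : -t = (m:ℤ) - t' := by omega
  rw [jv, this]
  obtain ⟨c, rfl⟩ := hd
  have h1 : ((m:ℤ) - (k:ℤ)*c) % (k:ℤ) = (m:ℤ) % (k:ℤ) := by
    conv_rhs => rw [show (m:ℤ) = (m - k*c) + c*k by ring]
    rw [Int.add_mul_emod_self_right]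
  rw [h1, Int.emod_eq_of_lt (by positivity) (by exact_mod_cast hm)]
  simp

variable (hX : NadicModel n X)

/-- level of v.A as clone, upper level -/
lemma A_isCloneAt' (v : DLPoint n X) {s : ℤ} (h : s = v.t) : IsCloneAt n v.A s := h ▸ v.hA
lemma B_isCloneAt' (v : DLPoint n X) {s : ℤ} (h : s = -v.t) : IsCloneAt n v.B s := h ▸ v.hB

/-- the enlarged A-clone -/
noncomputable def Aup (v : DLPoint n X) : Set X := clone n (cA hX v) (v.t + jv k v.t)

/-- the digit string of `v.A` inside `Aup v` -/
noncomputable def dsv (v : DLPoint n X) : List (Fin n) :=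
  addr hX (jv k v.t) (Aup (k := k) hX v) (v.t + jv k v.t) v.A

/-- the shrunk B-clone -/
noncomputable def Bup (v : DLPoint n X) : Set X := desc hX (dsv (k := k) hX v) v.B (-v.t)

lemma Aup_isClone (v : DLPoint n X) : IsCloneAt n (Aup (k := k) hX v) (v.t + jv k v.t) :=
  ⟨cA hX v, rfl⟩

lemma A_subset_Aup (v : DLPoint n X) : v.A ⊆ Aup (k := k) hX v := by
  rw [A_eq hX v, Aup]
  exact clone_mono hX.n_ge_two _ (by omega)

lemma dsv_length (v : DLPoint n X) : (dsv (k := k) hX v).length = jv k v.t :=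
  addr_length hX _ _ _ _

lemma Bup_isClone (v : DLPoint n X) :
    IsCloneAt n (Bup (k := k) hX v) (-(v.t + jv k v.t)) := by
  have h := desc_isClone hX (dsv (k := k) hX v) v.B (-v.t) v.hB
  rw [dsv_length hX v] at h
  have : -v.t - (jv k v.t : ℤ) = -(v.t + jv k v.t) := by ring
  rwa [this] at h

lemma Bup_subset (v : DLPoint n X) : Bup (k := k) hX v ⊆ v.B :=
  desc_subset hX _ _ _ v.hB

/-- the rounded-up vertex -/
noncomputable def up (v : DLPoint n X) : DLPoint n X :=
  ⟨Aup (k := k) hX v, Bup (k := k) hX v, v.t + jv k v.t,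
    ⟨cA hX v, rfl⟩, Bup_isClone hX v⟩

lemma up_t (v : DLPoint n X) : (up (k := k) hX v).t = v.t + jv k v.t := rfl

lemma up_dvd (hk : 0 < k) (v : DLPoint n X) : (k:ℤ) ∣ (up (k := k) hX v).t :=
  jv_dvd hk v.t

/-- the bijection `DLPoint ≃ DLkVert × Fin k` -/
noncomputable def Gmap (hk : 0 < k) (v : DLPoint n X) : DLkVert n k X × Fin k :=
  (⟨up (k := k) hX v, up_dvd hX hk v⟩, ⟨jv k v.t, jv_lt hk v.t⟩)

/-- the inverse map -/
noncomputable def Ginv (w : DLkVert n k X) (m : ℕ) : DLPoint n X :=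
  let t' := (vrt w).t
  let t := t' - m
  let y := ctr hX (vrt w).B (-t')
  let B := clone n y (-t)
  let es := addr hX m B (-t) (vrt w).B
  ⟨desc hX es (vrt w).A t', B, t,
    by
      have h := desc_isClone hX es (vrt w).A t' (vrt w).hA
      rw [addr_length hX] at h
      exact h,
    ⟨y, rfl⟩⟩

lemma Ginv_t (w : DLkVert n k X) (m : ℕ) : (Ginv hX w m).t = (vrt w).t - m := rfl

lemma Ginv_Gmap (hk : 0 < k) (v : DLPoint n X) :
    Ginv hX (Gmap hX hk v).1 ((Gmap hX hk v).2 : ℕ) = v := by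
  set j := jv k v.t with hj
  set t := v.t with ht
  set t' := t + j with ht'
  -- components of Gmap
  have hw : vrt (Gmap hX hk v).1 = up (k := k) hX v := rfl
  have hm : ((Gmap hX hk v).2 : ℕ) = j := rfl
  refine DLPoint.ext' ?_ ?_ ?_
  · -- A component
    show desc hX (addr hX j (clone n (ctr hX (Bup (k := k) hX v) (-t'))
      (-(t' - j))) (-(t' - j)) (Bup (k := k) hX v)) (Aup (k := k) hX v) t' = v.A
    have hBrec : clone n (ctr hX (Bup (k := k) hX v) (-(t':ℤ))) (-(t' - (j:ℤ))) = v.B := by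
      have hy : ctr hX (Bup (k := k) hX v) (-(t':ℤ)) ∈ v.B :=
        Bup_subset hX v (ctr_mem hX (by
          have := Bup_isClone (k := k) hX v
          rwa [show -(v.t + (jv k v.t:ℤ)) = -(t':ℤ) from by rw [ht', ht, hj]] at this))
      have := clone_eq_of_mem hX (B_isCloneAt' v (show -(t' - (j:ℤ)) = -v.t by omega)) hy
      exact this.symm
    rw [hBrec]
    have hds : addr hX j v.B (-(t' - (j:ℤ))) (Bup (k := k) hX v) = dsv (k := k) hX v := by
      have he : -(t' - (j:ℤ)) = -v.t := by omega
      rw [he]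
      have := addr_desc hX (dsv (k := k) hX v) v.B (-v.t) v.hB
      rw [dsv_length hX v] at this
      exact this
    rw [hds]
    exact desc_addr hX j (Aup (k := k) hX v) t' v.A (Aup_isClone hX v)
      (A_isCloneAt' v (by omega)) (A_subset_Aup hX v)
  · -- B component
    show clone n (ctr hX (Bup (k := k) hX v) (-(t':ℤ))) (-(t' - (j:ℤ))) = v.B
    have hy : ctr hX (Bup (k := k) hX v) (-(t':ℤ)) ∈ v.B :=
      Bup_subset hX v (ctr_mem hX (by
        have := Bup_isClone (k := k) hX v
        rwa [show -(v.t + (jv k v.t:ℤ)) = -(t':ℤ) from by rw [ht', ht, hj]] at this))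
    exact (clone_eq_of_mem hX (B_isCloneAt' v (show -(t' - (j:ℤ)) = -v.t by omega)) hy).symm
  · show t' - (j:ℤ) = v.t
    omega

lemma Gmap_Ginv (hk : 0 < k) (w : DLkVert n k X) (m : Fin k) :
    Gmap hX hk (Ginv hX w (m : ℕ)) = (w, m) := by
  set t' := (vrt w).t with ht'
  set t := t' - (m:ℕ) with ht
  set y := ctr hX (vrt w).B (-t') with hy
  set B := clone n y (-t) with hB
  set es := addr hX (m:ℕ) B (-t) (vrt w).B with hes
  set v := Ginv hX w (m:ℕ) with hv
  have hvA : v.A = desc hX es (vrt w).A t' := rfl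
  have hvB : v.B = B := rfl
  have hvt : v.t = t := rfl
  have hdvd : (k:ℤ) ∣ t' := vrt_dvd w
  have hjv : jv k v.t = (m:ℕ) := by
    rw [hvt]
    exact jv_eq_of hk (by omega) hdvd m.2
  -- B-side facts
  have hyB : y ∈ (vrt w).B := ctr_mem hX (B_isClone (vrt w))
  have hwB_eq : (vrt w).B = clone n y (-t') := clone_eq_of_mem hX (B_isClone (vrt w)) hyB
  have hwBsub : (vrt w).B ⊆ B := by
    rw [hwB_eq, hB]
    exact clone_mono hX.n_ge_two _ (by omega)
  have hBclone : IsCloneAt n B (-t) := ⟨y, hB⟩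
  -- A-side facts
  have hAclone : IsCloneAt n v.A t := by
    have h := desc_isClone hX es (vrt w).A t' (vrt w).hA
    rw [hes, addr_length hX] at h
    rw [hvA, hes]
    have he : t' - ((m:ℕ):ℤ) = t := by omega
    rwa [he] at h
  have hAsub : v.A ⊆ (vrt w).A := by
    rw [hvA]; exact desc_subset hX _ _ _ (vrt w).hA
  -- Aup of v equals w.A
  have hAup : Aup (k := k) hX v = (vrt w).A := by
    rw [Aup, hjv, hvt]
    have hmem : cA hX v ∈ (vrt w).A := hAsub (cA_mem hX v)
    have h3 := clone_eq_of_mem hX (A_isClone (vrt w)) hmem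
    rw [h3]
    have h4 : t + ((m:ℕ):ℤ) = t' := by omega
    rw [h4]
  -- the digits of v recover es
  have hdsv : dsv (k := k) hX v = es := by
    rw [dsv, hjv, hAup, hvt, hvA]
    have he : t + ((m:ℕ):ℤ) = t' := by omega
    rw [he]
    have h5 := addr_desc hX es (vrt w).A t' (vrt w).hA
    have hlen : es.length = (m:ℕ) := by rw [hes]; exact addr_length hX _ _ _ _
    rw [hlen] at h5
    exact h5
  -- Bup of v recovers w.B
  have hBup : Bup (k := k) hX v = (vrt w).B := by
    rw [Bup, hdsv, hvB, hvt]
    have hwBclone : IsCloneAt n (vrt w).B (-t - (m:ℕ)) :=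
      B_isCloneAt' (vrt w) (by omega)
    exact desc_addr hX (m:ℕ) B (-t) (vrt w).B hBclone
      (by rwa [show (-t - ((m:ℕ):ℤ)) = (-t) - ((m:ℕ):ℤ) from rfl] at hwBclone) hwBsub
  -- conclude
  have h1 : (Gmap hX hk v).1 = w := by
    apply DLkVert.ext'
    refine DLPoint.ext' ?_ ?_ ?_
    · show Aup (k := k) hX v = (vrt w).A
      exact hAup
    · show Bup (k := k) hX v = (vrt w).B
      exact hBup
    · show v.t + (jv k v.t : ℤ) = t'
      rw [hjv, hvt]; omega
  have h2 : (Gmap hX hk v).2 = m := by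
    have : ((Gmap hX hk v).2 : ℕ) = jv k v.t := rfl
    apply Fin.ext
    rw [this, hjv]
  rw [← h1, ← h2]

lemma Gmap_bijective (hk : 0 < k) :
    Function.Bijective (Gmap (n := n) (X := X) hX hk) := by
  refine Function.bijective_iff_has_inverse.mpr ⟨fun p => Ginv hX p.1 (p.2 : ℕ), ?_, ?_⟩
  · intro v; exact Ginv_Gmap hX hk v
  · intro p; exact Gmap_Ginv hX hk p.1 p.2

end Up
end S19

namespace S19
section Disp
variable {n k : ℕ} {X : Type*} [MetricSpace X] (hX : NadicModel n X)

/-- intermediate points of the displacement walk -/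
noncomputable def fup (v : DLPoint n X) (m : ℕ) : DLPoint n X :=
  ⟨clone n (cA hX v) (v.t + min m (jv k v.t)),
   desc hX ((dsv (k := k) hX v).take m) v.B (-v.t),
   v.t + min m (jv k v.t), ⟨cA hX v, rfl⟩, by
     have h := desc_isClone hX ((dsv (k := k) hX v).take m) v.B (-v.t) v.hB
     rw [List.length_take, dsv_length hX v] at h
     have he : -v.t - ((min m (jv k v.t) : ℕ) : ℤ) = -(v.t + min m (jv k v.t)) := by
       push_cast; ring
     rwa [he] at h⟩

lemma fup_zero (v : DLPoint n X) : fup (k := k) hX v 0 = v := by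
  refine DLPoint.ext' ?_ ?_ ?_
  · show clone n (cA hX v) (v.t + (min 0 (jv k v.t) : ℕ)) = v.A
    simp [Nat.zero_min, (A_eq hX v).symm]
  · rfl
  · show v.t + ((min 0 (jv k v.t) : ℕ) : ℤ) = v.t
    simp [Nat.zero_min]

lemma fup_top (v : DLPoint n X) : fup (k := k) hX v (jv k v.t) = up (k := k) hX v := by
  refine DLPoint.ext' ?_ ?_ ?_
  · show clone n (cA hX v) (v.t + (min (jv k v.t) (jv k v.t) : ℕ)) = Aup (k := k) hX v
    rw [min_self]; rfl
  · show desc hX ((dsv (k := k) hX v).take (jv k v.t)) v.B (-v.t) = Bup (k := k) hX v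
    rw [← dsv_length hX v, List.take_length]
    rfl
  · show v.t + ((min (jv k v.t) (jv k v.t) : ℕ) : ℤ) = (up (k := k) hX v).t
    rw [min_self]; rfl

lemma fup_adj (v : DLPoint n X) (m : ℕ) (hm : m < jv k v.t) :
    (DLPGraph n X).Adj (fup (k := k) hX v m) (fup (k := k) hX v (m+1)) := by
  have hmin1 : min m (jv k v.t) = m := by omega
  have hmin2 : min (m+1) (jv k v.t) = m+1 := by omega
  constructor
  · left
    refine ⟨?_, ?_, ?_⟩
    · show v.t + ((min (m+1) (jv k v.t) : ℕ) : ℤ) = v.t + ((min m (jv k v.t) : ℕ) : ℤ) + 1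
      rw [hmin1, hmin2]; push_cast; ring
    · show clone n (cA hX v) (v.t + (min m (jv k v.t) : ℕ)) ⊆
        clone n (cA hX v) (v.t + (min (m+1) (jv k v.t) : ℕ))
      rw [hmin1, hmin2]
      exact clone_mono hX.n_ge_two _ (by push_cast; omega)
    · show desc hX ((dsv (k := k) hX v).take (m+1)) v.B (-v.t) ⊆
        desc hX ((dsv (k := k) hX v).take m) v.B (-v.t)
      have hlen : m < (dsv (k := k) hX v).length := by rw [dsv_length hX v]; exact hm
      have htake : (dsv (k := k) hX v).take (m+1) =
          (dsv (k := k) hX v).take m ++ [(dsv (k := k) hX v).get ⟨m, hlen⟩] := by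
        rw [List.take_succ]
        congr 1
        rw [List.getElem?_eq_getElem hlen]
        rfl
      rw [htake, desc_append]
      have hclone : IsCloneAt n (desc hX ((dsv (k := k) hX v).take m) v.B (-v.t))
          ((-v.t) - ((dsv (k := k) hX v).take m).length) :=
        desc_isClone hX _ _ _ v.hB
      exact child_subset hX hclone _
  · apply DLPoint.ne_of_t
    show v.t + ((min m (jv k v.t) : ℕ) : ℤ) ≠ v.t + ((min (m+1) (jv k v.t) : ℕ) : ℤ)
    rw [hmin1, hmin2]
    push_cast; omega

lemma up_dist (hk : 0 < k) (v : DLPoint n X) :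
    (DLPGraph n X).dist v (up (k := k) hX v) ≤ k := by
  obtain ⟨p, hp⟩ := chain_walk (G := DLPGraph n X) (fup (k := k) hX v) (jv k v.t)
    (fun m hm => fup_adj hX v m hm)
  have h := SimpleGraph.dist_le (p.copy (fup_zero hX v) (fup_top hX v))
  rw [SimpleGraph.Walk.length_copy, hp] at h
  exact h.trans (jv_lt hk v.t).le

end Disp
end S19

namespace S19

/-- fibers of the first projection restricted to a product -/
def fiberEquiv {α β : Type*} (w : α) : {p : α × β // p.1 = w} ≃ β where
  toFun p := p.1.2
  invFun b := ⟨(w, b), rfl⟩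
  left_inv := by rintro ⟨⟨w', b⟩, rfl⟩; rfl
  right_inv b := rfl

end S19



/-- Any bijective quasi-isometry `φ' : DL(n^k,n^k) → DL(n,n)` is a
bounded distance from `i ∘ φ` where `i` is the natural index-`k` inclusion and
`φ : DL(n^k,n^k) → DL(n^k,n^k)` is a `k`-to-1 quasi-isometry. -/
theorem stmt_19 (n k : ℕ) (hn : 2 ≤ n) (hk : 1 < k)
    {X : Type*} [MetricSpace X] (hX : NadicModel n X)
    (φ' : DLkVert n k X → DLPoint n X) (K C : ℝ) (hK : 1 ≤ K) (hC : 0 ≤ C)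
    (hbij : Function.Bijective φ')
    (hqi : ∀ v w : DLkVert n k X,
      (1 / K) * ((DLkGraph n k X).dist v w : ℝ) - C ≤
        ((DLPGraph n X).dist (φ' v) (φ' w) : ℝ) ∧
      ((DLPGraph n X).dist (φ' v) (φ' w) : ℝ) ≤
        K * ((DLkGraph n k X).dist v w : ℝ) + C) :
    ∃ (φ : DLkVert n k X → DLkVert n k X) (K' C' : ℝ), 1 ≤ K' ∧ 0 ≤ C' ∧
      (∀ v w : DLkVert n k X,
        (1 / K') * ((DLkGraph n k X).dist v w : ℝ) - C' ≤
          ((DLkGraph n k X).dist (φ v) (φ w) : ℝ) ∧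
        ((DLkGraph n k X).dist (φ v) (φ w) : ℝ) ≤
          K' * ((DLkGraph n k X).dist v w : ℝ) + C') ∧
      (∃ D : ℝ, ∀ w : DLkVert n k X, ∃ v : DLkVert n k X,
        ((DLkGraph n k X).dist w (φ v) : ℝ) ≤ D) ∧
      (∀ w : DLkVert n k X, Nat.card (φ ⁻¹' {w}) = k) ∧
      ∃ D' : ℝ, ∀ v : DLkVert n k X,
        ((DLPGraph n X).dist (DLinc n k X (φ v)) (φ' v) : ℝ) ≤ D' := by
  classical
  have hk' : 0 < k := by omega
  set φ : DLkVert n k X → DLkVert n k X :=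
    fun u => (S19.Gmap hX hk' (φ' u)).1 with hφ
  have hvrtφ : ∀ u, S19.vrt (φ u) = S19.up (k := k) hX (φ' u) := fun u => rfl
  -- displacement bound (ℕ)
  have hdispN : ∀ u : DLkVert n k X,
      (DLPGraph n X).dist (S19.vrt (φ u)) (φ' u) ≤ k := by
    intro u
    rw [SimpleGraph.dist_comm, hvrtφ u]
    exact S19.up_dist hX hk' (φ' u)
  have hk1R : (1:ℝ) ≤ (k:ℝ) := by exact_mod_cast hk'
  have hKpos : (0:ℝ) < K := lt_of_lt_of_le one_pos hK
  refine ⟨φ, 5*k*K, 6*C + 13*k, ?_, by positivity, ?_, ?_, ?_, ⟨(k:ℝ), ?_⟩⟩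
  · nlinarith
  · -- quasi-isometry bounds
    intro v w
    set m := (DLkGraph n k X).dist v w with hm
    set m' := (DLkGraph n k X).dist (φ v) (φ w) with hm'
    set M := (DLPGraph n X).dist (φ' v) (φ' w) with hM
    have conn := S19.dP_conn hX
    -- upper chain
    have hup1 : m' ≤ 5 * (DLPGraph n X).dist (S19.vrt (φ v)) (S19.vrt (φ w)) :=
      S19.dk_le_5dP hX hk' (φ v) (φ w)
    have htri1 : (DLPGraph n X).dist (S19.vrt (φ v)) (S19.vrt (φ w)) ≤
        (DLPGraph n X).dist (S19.vrt (φ v)) (φ' v) + M +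
        (DLPGraph n X).dist (φ' w) (S19.vrt (φ w)) := by
      calc (DLPGraph n X).dist (S19.vrt (φ v)) (S19.vrt (φ w))
          ≤ (DLPGraph n X).dist (S19.vrt (φ v)) (φ' v) +
            (DLPGraph n X).dist (φ' v) (S19.vrt (φ w)) := conn.dist_triangle
        _ ≤ (DLPGraph n X).dist (S19.vrt (φ v)) (φ' v) +
            (M + (DLPGraph n X).dist (φ' w) (S19.vrt (φ w))) := by
            have := conn.dist_triangle (u := φ' v) (v := φ' w) (w := S19.vrt (φ w))
            omega
        _ = _ := by omega
    have hd1 := hdispN v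
    have hd2 : (DLPGraph n X).dist (φ' w) (S19.vrt (φ w)) ≤ k := by
      rw [SimpleGraph.dist_comm]; exact hdispN w
    have hupN : m' ≤ 5 * M + 10 * k := by omega
    -- lower chain
    have hlow1 : (DLPGraph n X).dist (S19.vrt (φ v)) (S19.vrt (φ w)) ≤ k * m' :=
      S19.dP_le_k_dk hX hk' (φ v) (φ w)
    have htri2 : M ≤ k * m' + 2 * k := by
      have h1 : M ≤ (DLPGraph n X).dist (φ' v) (S19.vrt (φ v)) +
          ((DLPGraph n X).dist (S19.vrt (φ v)) (S19.vrt (φ w)) +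
           (DLPGraph n X).dist (S19.vrt (φ w)) (φ' w)) := by
        have ha := conn.dist_triangle (u := φ' v) (v := S19.vrt (φ v)) (w := φ' w)
        have hb := conn.dist_triangle (u := S19.vrt (φ v)) (v := S19.vrt (φ w)) (w := φ' w)
        omega
      have h2 : (DLPGraph n X).dist (φ' v) (S19.vrt (φ v)) ≤ k := by
        rw [SimpleGraph.dist_comm]; exact hdispN v
      have h3 : (DLPGraph n X).dist (S19.vrt (φ w)) (φ' w) ≤ k := hdispN w
      omega
    -- cast to ℝ
    have hupR : (m' : ℝ) ≤ 5 * (M:ℝ) + 10 * (k:ℝ) := by exact_mod_cast hupN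
    have htri2R : (M : ℝ) ≤ (k:ℝ) * m' + 2 * k := by exact_mod_cast htri2
    have hq1 := (hqi v w).1
    have hq2 := (hqi v w).2
    rw [← hm, ← hM] at hq1 hq2
    have hm0 : (0:ℝ) ≤ (m:ℝ) := Nat.cast_nonneg m
    have hm'0 : (0:ℝ) ≤ (m':ℝ) := Nat.cast_nonneg m'
    have hM0 : (0:ℝ) ≤ (M:ℝ) := Nat.cast_nonneg M
    constructor
    · -- lower bound
      have hKne : K ≠ 0 := ne_of_gt hKpos
      have hmle : (m:ℝ) ≤ K * ((k:ℝ) * m' + 2*k + C) := by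
        have h1 : (1/K) * (m:ℝ) ≤ (k:ℝ)*m' + 2*k + C := by linarith
        have h2 := mul_le_mul_of_nonneg_left h1 (le_of_lt hKpos)
        rw [show K * ((1/K) * (m:ℝ)) = m by field_simp] at h2
        exact h2
      have hK'pos : (0:ℝ) < 5*k*K := by positivity
      have hK'ne : (5*(k:ℝ)*K) ≠ 0 := ne_of_gt hK'pos
      have h_a : (0:ℝ) ≤ (k:ℝ)*K*(m':ℝ) := by positivity
      have h_b : (0:ℝ) ≤ ((k:ℝ)-1)*K*C :=
        mul_nonneg (mul_nonneg (by linarith) hKpos.le) hC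
      have h_c : (0:ℝ) ≤ ((k:ℝ)-1)*((k:ℝ)*K) :=
        mul_nonneg (by linarith) (by positivity)
      have h_d : (0:ℝ) ≤ (k:ℝ)*K*C := by positivity
      have h_e : (0:ℝ) ≤ (k:ℝ)*(k:ℝ)*K := by positivity
      have hbig : (m:ℝ) ≤ (5*k*K) * ((m':ℝ) + (6*C + 13*k)) := by nlinarith
      have h4 : (1/(5*(k:ℝ)*K)) * (m:ℝ) ≤ (m':ℝ) + (6*C + 13*k) := by
        have h5 := mul_le_mul_of_nonneg_left hbig (le_of_lt (by positivity :
          (0:ℝ) < 1/(5*(k:ℝ)*K)))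
        rw [show (1/(5*(k:ℝ)*K)) * ((5*(k:ℝ)*K) * ((m':ℝ) + (6*C + 13*k)))
          = (m':ℝ) + (6*C + 13*k) by field_simp] at h5
        exact h5
      linarith
    · -- upper bound
      have h_f : (0:ℝ) ≤ ((k:ℝ)-1)*K*(m:ℝ) :=
        mul_nonneg (mul_nonneg (by linarith) hKpos.le) hm0
      nlinarith
  · -- coarse surjectivity
    refine ⟨0, fun w => ?_⟩
    set E := Equiv.ofBijective φ' hbij with hE
    refine ⟨E.symm (S19.Ginv hX w ((⟨0, hk'⟩ : Fin k) : ℕ)), ?_⟩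
    have h1 : φ' (E.symm (S19.Ginv hX w ((⟨0, hk'⟩ : Fin k) : ℕ)))
        = S19.Ginv hX w ((⟨0, hk'⟩ : Fin k) : ℕ) := E.apply_symm_apply _
    have h2 : φ (E.symm (S19.Ginv hX w ((⟨0, hk'⟩ : Fin k) : ℕ))) = w := by
      rw [hφ]
      simp only [h1]
      rw [S19.Gmap_Ginv hX hk' w ⟨0, hk'⟩]
    rw [h2]
    simp
  · -- fiber count
    intro w
    set E2 : DLkVert n k X ≃ DLkVert n k X × Fin k :=
      (Equiv.ofBijective φ' hbij).trans
        (Equiv.ofBijective (S19.Gmap hX hk') (S19.Gmap_bijective hX hk')) with hE2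
    have hE2eq : ∀ u, E2 u = S19.Gmap hX hk' (φ' u) := fun u => rfl
    have e : (φ ⁻¹' {w} : Set (DLkVert n k X)) ≃ Fin k := by
      refine (Equiv.subtypeEquiv E2 ?_).trans (S19.fiberEquiv w)
      intro u
      constructor
      · intro hu
        show (E2 u).1 = w
        rw [hE2eq]
        exact hu
      · intro hu
        show φ u = w
        have : (E2 u).1 = w := hu
        rw [hE2eq] at this
        exact this
    rw [Nat.card_congr e]
    simp
  · -- bounded distance from φ'
    intro v
    have h := hdispN v
    have : (DLPGraph n X).dist (DLinc n k X (φ v)) (φ' v) ≤ k := h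
    exact_mod_cast this
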